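/- arXiv:2405.15111 — 2 statements merged into one kernel-verified Lean document; each statement's English description precedes it below -/
import Mathlib

section
/- Let X = (2^ℕ)^ℕ, Y = 2^ℕ, and let E_ctble be the equivalence relation on X given by x E_ctble y iff {x_n : n ∈ ℕ} = {y_n : n ∈ ℕ}. Define P ⊆ X × Y by P(x, y) iff y ∉ {x_n : n ∈ ℕ}. Then P is E_ctble-invariant with conull sections (for the uniform product measure on 2^ℕ), but there is no Borel function f : X → Y^ℕ such that (x, f(x)_n) ∈ P for all x, n and such that x E_ctble y implies {f(x)_n : n} = {f(y)_n : n}. -/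
/-!
Suppose `f` were a Borel invariant countable uniformization. Close a countable set `S` of reals
under the countably many Skolem functions of Baire-category (Cohen) forcing on pairs of finite
sequences of reals that concern the Borel sets `f z.1 0 n = b` and `f z.1 0 = f z.2 m`, and build by
hand a pair `(x₁, x₂)` of enumerations of `S` that is generic over `S`. Invariance gives
`f x₁ 0 = f x₂ m` for some `m`, and a condition `p` of the generic forces it. As the two coordinates
are mutually generic, every bit of `f z.1 0` forced below `p` agrees with a bit decided on the
second coordinate alone, so `p` decides `f x₁ 0`; being computed from `p`, it lies in `S = range x₁`.
The conull sections come from singletons being null for the coin-tossing measure.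
-/

open Set MeasureTheory

theorem exists_maximal_pairwise_not_rel {α : Type*} {r : α → α → Prop}
    (hsymm : ∀ a b, r a b → r b a) (hrefl : ∀ a, r a a) (T : Set α) :
    ∃ T₀ ⊆ T, T₀.Pairwise (fun a b => ¬ r a b) ∧ ∀ t ∈ T, ∃ t₀ ∈ T₀, r t₀ t := by
  obtain ⟨T₀, ⟨hT₀T, hT₀⟩, hmax⟩ :=
    zorn_subset {T' | T' ⊆ T ∧ T'.Pairwise (fun a b => ¬ r a b)} fun c hc hchain =>
      ⟨⋃₀ c, ⟨sUnion_subset fun _ hs => (hc hs).1,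
        (pairwise_sUnion hchain.directedOn).2 fun _ hs => (hc hs).2⟩,
        fun _ => subset_sUnion_of_mem⟩
  refine ⟨T₀, hT₀T, hT₀, fun t ht => ?_⟩
  by_contra! hnone
  have hins : insert t T₀ ⊆ T₀ := hmax
    ⟨insert_subset ht hT₀T, pairwise_insert.2 ⟨hT₀, fun b hb _ =>
      ⟨fun h => hnone b hb (hsymm _ _ h), hnone b hb⟩⟩⟩ (subset_insert _ _)
  exact hnone t (hins (mem_insert t T₀)) (hrefl t)

theorem exists_seq_applying_each_infinitely_often {α T : Type*} [Countable T]
    (R : T → α → α) (a : α) :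
    ∃ c : ℕ → α, c 0 = a ∧ (∀ s, c (s + 1) = c s ∨ ∃ t, c (s + 1) = R t (c s)) ∧
      ∀ t s₀, ∃ s, s₀ ≤ s ∧ c (s + 1) = R t (c s) := by
  have := Encodable.ofCountable T
  let task : ℕ → Option T := fun s => Encodable.decode s.unpair.1
  let step : ℕ → α → α := fun s p => (task s).elim p (R · p)
  let c : ℕ → α := fun s => Nat.rec a step s
  have hc : ∀ s, c (s + 1) = step s (c s) := fun _ => rfl
  refine ⟨c, rfl, fun s => ?_, fun t s₀ =>
    ⟨Nat.pair (Encodable.encode t) s₀, Nat.right_le_pair _ _, ?_⟩⟩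
  · rw [hc]
    simp only [step]
    rcases task s with _ | t
    exacts [Or.inl rfl, Or.inr ⟨t, rfl⟩]
  · simp [hc, step, task, Nat.unpair_pair, Encodable.encodek]

theorem exists_countable_closure {β : Type*} (Φ : Set β → Set β) (hmono : Monotone Φ)
    (hcount : ∀ T, T.Countable → (Φ T).Countable)
    (hfin : ∀ T, ∀ r ∈ Φ T, ∃ s ⊆ T, s.Finite ∧ r ∈ Φ s) {T₀ : Set β} (hT₀ : T₀.Countable) :
    ∃ S, T₀ ⊆ S ∧ S.Countable ∧ Φ S ⊆ S := by
  let stage : ℕ → Set β := fun j => Nat.rec T₀ (fun _ T => T ∪ Φ T) j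
  have hstage : Monotone stage := monotone_nat_of_le_succ fun _ => subset_union_left
  refine ⟨⋃ j, stage j, subset_iUnion stage 0,
    countable_iUnion fun j => ?_, fun r hr => ?_⟩
  · induction j with
    | zero => exact hT₀
    | succ j ih => exact ih.union (hcount _ ih)
  · obtain ⟨s, hsS, hs, hrs⟩ := hfin _ r hr
    obtain ⟨j, hj⟩ := hstage.directed_le.exists_mem_subset_of_finset_subset_biUnion
      (s := hs.toFinset) (by simpa using hsS)
    exact mem_iUnion.2 ⟨j + 1, Or.inr (hmono (by simpa using hj) hrs)⟩

theorem map_range_prefix_map_range {α : Type*} (x : ℕ → α) {j l : ℕ} (h : j ≤ l) :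
    (List.range j).map x <+: (List.range l).map x := by
  have : (List.range l).take j = List.range j := by
    rw [List.take_range, min_eq_left h]
  exact this ▸ (List.take_prefix j (List.range l)).map x

theorem prefix_of_le_of_chain {α : Type*} {c : ℕ → List α} (hc : ∀ k, c k <+: c (k + 1))
    {k k' : ℕ} (h : k ≤ k') : c k <+: c k' := by
  induction k', h using Nat.le_induction with
  | base => exact List.prefix_refl _
  | succ m _ ih => exact ih.trans (hc m)

/-- A condition `w` stands for a basic open set `[w]`, with `Le u v` meaning `[u] ⊆ [v]`; a point
lies in `[w]` iff `w` is one of its approximations. `ComeagerBelow B w` says that `B` is comeager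
in `[w]`, i.e. `w` forces `B` in Baire-category forcing. -/
structure ForcingFrame where
  Cond : Type
  Pt : Type
  Le : Cond → Cond → Prop
  le_refl : ∀ u, Le u u
  le_trans : ∀ {u v w}, Le u v → Le v w → Le u w
  approx : Pt → ℕ → Cond
  approx_directed : ∀ x j k, ∃ l, Le (approx x l) (approx x j) ∧ Le (approx x l) (approx x k)
  exists_approx_eq : ∀ x j u, Le (approx x j) u → ∃ l, approx x l = u
  exists_limit : ∀ c : ℕ → Cond, (∀ k, Le (c (k + 1)) (c k)) → ∃ x, ∀ k, ∃ j, approx x j = c k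

namespace ForcingFrame

section

variable (F : ForcingFrame)

def Extends (x : F.Pt) (w : F.Cond) : Prop := ∃ j, F.approx x j = w

def Compatible (u v : F.Cond) : Prop := ∃ c, F.Le c u ∧ F.Le c v

def DenseBelow (D : Set F.Cond) (w : F.Cond) : Prop := ∀ v, F.Le v w → ∃ u, F.Le u v ∧ u ∈ D

def Meets (x : F.Pt) (D : Set F.Cond) : Prop := ∃ j, F.approx x j ∈ D

def ComeagerBelow (B : Set F.Pt) (w : F.Cond) : Prop :=
  ∃ D : ℕ → Set F.Cond, (∀ k, F.DenseBelow (D k) w) ∧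
    ∀ x, F.Extends x w → (∀ k, F.Meets x (D k)) → x ∈ B

def HasBaireProperty (B : Set F.Pt) : Prop :=
  ∀ w, ∃ w', F.Le w' w ∧ (F.ComeagerBelow B w' ∨ F.ComeagerBelow Bᶜ w')

open Classical in
noncomputable def decision (B : Set F.Pt) (w : F.Cond) : F.Cond :=
  if h : ∃ w', F.Le w' w ∧ (F.ComeagerBelow B w' ∨ F.ComeagerBelow Bᶜ w') then h.choose else w

open Classical in
noncomputable def denseWitness (B : Set F.Pt) (w : F.Cond) : ℕ → Set F.Cond :=
  if h : F.ComeagerBelow B w then h.choose else fun _ => univ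

open Classical in
noncomputable def denseStep (B : Set F.Pt) (w : F.Cond) (k : ℕ) (v : F.Cond) : F.Cond :=
  if h : F.DenseBelow (F.denseWitness B w k) w ∧ F.Le v w then (h.1 v h.2).choose else v

variable {F} {B B' : Set F.Pt} {w w' : F.Cond} {x : F.Pt}

theorem Extends.of_le (hx : F.Extends x w') (hw : F.Le w' w) : F.Extends x w := by
  obtain ⟨j, rfl⟩ := hx
  exact F.exists_approx_eq x j w hw

theorem extends_approx (x : F.Pt) (j : ℕ) : F.Extends x (F.approx x j) := ⟨j, rfl⟩

theorem Extends.compatible (hw : F.Extends x w) (hw' : F.Extends x w') : F.Compatible w w' := by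
  obtain ⟨j, rfl⟩ := hw
  obtain ⟨k, rfl⟩ := hw'
  obtain ⟨l, hlj, hlk⟩ := F.approx_directed x j k
  exact ⟨_, hlj, hlk⟩

theorem denseBelow_univ (w : F.Cond) : F.DenseBelow univ w :=
  fun v _ => ⟨v, F.le_refl v, trivial⟩

theorem DenseBelow.of_le {D : Set F.Cond} (hD : F.DenseBelow D w) (hw : F.Le w' w) :
    F.DenseBelow D w' :=
  fun v hv => hD v (F.le_trans hv hw)

theorem ComeagerBelow.of_le (h : F.ComeagerBelow B w) (hw : F.Le w' w) : F.ComeagerBelow B w' := by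
  obtain ⟨D, hD, hB⟩ := h
  exact ⟨D, fun k => (hD k).of_le hw, fun x hx hm => hB x (hx.of_le hw) hm⟩

theorem ComeagerBelow.mono (h : F.ComeagerBelow B w) (hB : B ⊆ B') : F.ComeagerBelow B' w := by
  obtain ⟨D, hD, hT⟩ := h
  exact ⟨D, hD, fun x hx hm => hB (hT x hx hm)⟩

theorem comeagerBelow_of_forall_extends (h : ∀ x, F.Extends x w → x ∈ B) :
    F.ComeagerBelow B w :=
  ⟨fun _ => univ, fun _ => denseBelow_univ w, fun x hx _ => h x hx⟩

theorem ComeagerBelow.denseBelow_denseWitness (h : F.ComeagerBelow B w) (k : ℕ) :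
    F.DenseBelow (F.denseWitness B w k) w := by
  rw [denseWitness, dif_pos h]
  exact h.choose_spec.1 k

theorem ComeagerBelow.mem_of_meets (h : F.ComeagerBelow B w) (hx : F.Extends x w)
    (hm : ∀ k, F.Meets x (F.denseWitness B w k)) : x ∈ B := by
  rw [denseWitness, dif_pos h] at hm
  exact h.choose_spec.2 x hx hm

theorem denseStep_le (B : Set F.Pt) (w : F.Cond) (k : ℕ) (v : F.Cond) :
    F.Le (F.denseStep B w k v) v := by
  unfold denseStep
  split_ifs with h
  exacts [(h.1 v h.2).choose_spec.1, F.le_refl v]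

theorem ComeagerBelow.denseStep_mem (h : F.ComeagerBelow B w) {v : F.Cond} (hv : F.Le v w)
    (k : ℕ) : F.denseStep B w k v ∈ F.denseWitness B w k := by
  have hd : F.DenseBelow (F.denseWitness B w k) w ∧ F.Le v w := ⟨h.denseBelow_denseWitness k, hv⟩
  rw [denseStep, dif_pos hd]
  exact (hd.1 v hd.2).choose_spec.2

theorem comeagerBelow_iInter {ι : Type*} [Countable ι] {B : ι → Set F.Pt}
    (h : ∀ i, F.ComeagerBelow (B i) w) : F.ComeagerBelow (⋂ i, B i) w := by
  cases isEmpty_or_nonempty ι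
  · exact comeagerBelow_of_forall_extends fun x _ => by simp
  obtain ⟨e, he⟩ := exists_surjective_nat (ι × ℕ)
  refine ⟨fun n => F.denseWitness (B (e n).1) w (e n).2,
    fun n => (h _).denseBelow_denseWitness _, fun x hx hm => mem_iInter.2 fun i => ?_⟩
  refine (h i).mem_of_meets hx fun k => ?_
  obtain ⟨n, hn⟩ := he (i, k)
  simpa [hn] using hm n

theorem ComeagerBelow.inter (h : F.ComeagerBelow B w) (h' : F.ComeagerBelow B' w) :
    F.ComeagerBelow (B ∩ B') w := by
  rw [inter_eq_iInter]
  exact comeagerBelow_iInter fun b => by cases b <;> assumption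

theorem exists_extends_forall_meets {D : ℕ → Set F.Cond} (hD : ∀ k, F.DenseBelow (D k) w) :
    ∃ x, F.Extends x w ∧ ∀ k, F.Meets x (D k) := by
  let below := {v // F.Le v w}
  have step : ∀ k (v : below), ∃ u : below, F.Le u.1 v.1 ∧ u.1 ∈ D k := fun k v =>
    let ⟨u, hu, huD⟩ := hD k v.1 v.2
    ⟨⟨u, F.le_trans hu v.2⟩, hu, huD⟩
  choose next hnext using step
  let c : ℕ → below := fun k => Nat.rec ⟨w, F.le_refl w⟩ next k
  obtain ⟨x, hx⟩ := F.exists_limit (fun k => (c k).1) fun k => (hnext k (c k)).1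
  refine ⟨x, hx 0, fun k => ?_⟩
  obtain ⟨j, hj⟩ := hx (k + 1)
  exact ⟨j, hj ▸ (hnext k (c k)).2⟩

theorem ComeagerBelow.exists_mem (h : F.ComeagerBelow B w) : ∃ x, F.Extends x w ∧ x ∈ B := by
  obtain ⟨D, hD, hB⟩ := h
  obtain ⟨x, hx, hm⟩ := exists_extends_forall_meets hD
  exact ⟨x, hx, hB x hx hm⟩

theorem ComeagerBelow.not_compl (h : F.ComeagerBelow B w) : ¬ F.ComeagerBelow Bᶜ w := fun h' =>
  let ⟨_, _, hx, hx'⟩ := (h.inter h').exists_mem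
  hx' hx

/-- Gluing along a maximal antichain of conditions below which `B` is comeager. -/
theorem comeagerBelow_of_dense (h : ∀ v, F.Le v w → ∃ u, F.Le u v ∧ F.ComeagerBelow B u) :
    F.ComeagerBelow B w := by
  obtain ⟨T₀, hT₀B, hT₀, hmax⟩ := exists_maximal_pairwise_not_rel (r := F.Compatible)
    (fun _ _ ⟨c, hu, hv⟩ => ⟨c, hv, hu⟩) (fun u => ⟨u, F.le_refl u, F.le_refl u⟩)
    {t | F.ComeagerBelow B t}
  refine ⟨fun k => {u | ∃ t ∈ T₀, F.Le u t ∧ u ∈ F.denseWitness B t k}, fun k v hv => ?_,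
    fun x hxw hm => ?_⟩
  · obtain ⟨u, huv, hu⟩ := h v hv
    obtain ⟨t, ht, c, hct, hcu⟩ := hmax u hu
    obtain ⟨u', hu'c, hu'⟩ := (hT₀B ht).denseBelow_denseWitness k c hct
    exact ⟨u', F.le_trans hu'c (F.le_trans hcu huv), t, ht, F.le_trans hu'c hct, hu'⟩
  · obtain ⟨j₀, t₀, ht₀, hjt₀, -⟩ := hm 0
    have hxt₀ : F.Extends x t₀ := (extends_approx x j₀).of_le hjt₀
    refine (hT₀B ht₀).mem_of_meets hxt₀ fun k => ?_
    obtain ⟨j, t, ht, hjt, hjD⟩ := hm k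
    obtain rfl : t = t₀ := by
      by_contra hne
      exact hT₀ ht ht₀ hne (((extends_approx x j).of_le hjt).compatible hxt₀)
    exact ⟨j, hjD⟩

theorem hasBaireProperty_empty : F.HasBaireProperty ∅ := fun w =>
  ⟨w, F.le_refl w, Or.inr (comeagerBelow_of_forall_extends fun _ _ h => h)⟩

theorem HasBaireProperty.compl (h : F.HasBaireProperty B) : F.HasBaireProperty Bᶜ := fun w =>
  let ⟨w', hw', h'⟩ := h w
  ⟨w', hw', by rwa [compl_compl, or_comm]⟩

theorem hasBaireProperty_iUnion {B : ℕ → Set F.Pt} (h : ∀ k, F.HasBaireProperty (B k)) :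
    F.HasBaireProperty (⋃ k, B k) := by
  intro w
  by_cases hc : ∃ k w', F.Le w' w ∧ F.ComeagerBelow (B k) w'
  · obtain ⟨k, w', hw', hB⟩ := hc
    exact ⟨w', hw', Or.inl (hB.mono (subset_iUnion B k))⟩
  simp only [not_exists, not_and] at hc
  refine ⟨w, F.le_refl w, Or.inr ?_⟩
  rw [compl_iUnion]
  refine comeagerBelow_iInter fun k => comeagerBelow_of_dense fun v hv => ?_
  obtain ⟨w', hw', h'⟩ := h k v
  exact ⟨w', hw', h'.resolve_left (hc k w' (F.le_trans hw' hv))⟩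

theorem HasBaireProperty.decides (h : F.HasBaireProperty B) (w : F.Cond) :
    F.ComeagerBelow B (F.decision B w) ∨ F.ComeagerBelow Bᶜ (F.decision B w) := by
  rw [decision, dif_pos (h w)]
  exact (h w).choose_spec.2

theorem decision_le (B : Set F.Pt) (w : F.Cond) : F.Le (F.decision B w) w := by
  unfold decision
  split_ifs with h
  exacts [h.choose_spec.1, F.le_refl w]

variable (F) in
@[reducible] def baireSigma : MeasurableSpace F.Pt where
  MeasurableSet' := F.HasBaireProperty
  measurableSet_empty := hasBaireProperty_empty
  measurableSet_compl _ := HasBaireProperty.compl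
  measurableSet_iUnion _ := hasBaireProperty_iUnion

/-- Rasiowa–Sikorski inside the countable set `Q`: the chain interleaves the requirements `R t`
with the decision and density steps of every set of `𝒜`. -/
theorem exists_generic_chain {𝒜 : Set (Set F.Pt)} (h𝒜 : 𝒜.Countable)
    (hcompl : ∀ B ∈ 𝒜, Bᶜ ∈ 𝒜) (hBP : ∀ B ∈ 𝒜, F.HasBaireProperty B)
    {Q : Set F.Cond} (hQ : Q.Countable) (hdec : ∀ B ∈ 𝒜, ∀ p ∈ Q, F.decision B p ∈ Q)
    (hdense : ∀ B ∈ 𝒜, ∀ w ∈ Q, ∀ k, ∀ v ∈ Q, F.denseStep B w k v ∈ Q)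
    {T : Type*} [Countable T] (R : T → F.Cond → F.Cond) (hRle : ∀ t p, F.Le (R t p) p)
    (hRQ : ∀ t, ∀ p ∈ Q, R t p ∈ Q) {p₀ : F.Cond} (hp₀ : p₀ ∈ Q) :
    ∃ c : ℕ → F.Cond, (∀ s, c s ∈ Q) ∧ (∀ s s', s ≤ s' → F.Le (c s') (c s)) ∧
      (∀ t s₀, ∃ s, s₀ ≤ s ∧ c (s + 1) = R t (c s)) ∧
      ∀ x, (∀ s, F.Extends x (c s)) → ∀ B ∈ 𝒜, x ∈ B → ∃ s, F.ComeagerBelow B (c s) := by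
  have := h𝒜.to_subtype
  have := hQ.to_subtype
  let R' : T ⊕ 𝒜 ⊕ (𝒜 × Q × ℕ) → F.Cond → F.Cond
    | .inl t => R t
    | .inr (.inl B) => F.decision B
    | .inr (.inr (B, w, k)) => F.denseStep B w k
  have hR'le : ∀ t p, F.Le (R' t p) p := by
    rintro (t | B | ⟨B, w, k⟩) p
    exacts [hRle t p, decision_le B p, denseStep_le B w k p]
  have hR'Q : ∀ t, ∀ p ∈ Q, R' t p ∈ Q := by
    rintro (t | ⟨B, hB⟩ | ⟨⟨B, hB⟩, ⟨w, hw⟩, k⟩) p hp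
    exacts [hRQ t p hp, hdec B hB p hp, hdense B hB w hw k p hp]
  obtain ⟨c, hc0, hstep, hhit⟩ := exists_seq_applying_each_infinitely_often R' p₀
  have hcQ : ∀ s, c s ∈ Q := by
    intro s
    induction s with
    | zero => exact hc0 ▸ hp₀
    | succ s ih =>
      obtain h | ⟨t, h⟩ := hstep s
      exacts [h ▸ ih, h ▸ hR'Q t _ ih]
  have hcle : ∀ s s', s ≤ s' → F.Le (c s') (c s) := by
    intro s s' hss'
    induction s', hss' using Nat.le_induction with
    | base => exact F.le_refl _
    | succ m _ ih =>
      refine F.le_trans ?_ ih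
      obtain h | ⟨t, h⟩ := hstep m
      exacts [h ▸ F.le_refl _, h ▸ hR'le t _]
  refine ⟨c, hcQ, hcle, fun t => hhit (.inl t), fun x hx B hB hxB => ?_⟩
  have hforced : ∀ B ∈ 𝒜, ∀ s, F.ComeagerBelow B (c s) → x ∈ B := by
    intro B hB s hs
    refine hs.mem_of_meets (hx s) fun k => ?_
    obtain ⟨s', hss', hs'⟩ := hhit (.inr (.inr (⟨B, hB⟩, ⟨c s, hcQ s⟩, k))) s
    obtain ⟨j, hj⟩ := hx (s' + 1)
    exact ⟨j, hj.trans hs' ▸ hs.denseStep_mem (hcle s s' hss') k⟩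
  obtain ⟨s, -, hs⟩ := hhit (.inr (.inl ⟨B, hB⟩)) 0
  refine ⟨s + 1, ?_⟩
  rw [hs]
  refine ((hBP B hB).decides (c s)).resolve_right fun hc => ?_
  exact hforced _ (hcompl B hB) (s + 1) (by rw [hs]; exact hc) hxB

end

@[reducible] def listFrame (α : Type) [Inhabited α] : ForcingFrame where
  Cond := List α
  Pt := ℕ → α
  Le u v := v <+: u
  le_refl u := List.prefix_refl u
  le_trans h₁ h₂ := h₂.trans h₁
  approx x j := (List.range j).map x
  approx_directed x j k :=
    ⟨max j k, map_range_prefix_map_range x (le_max_left j k),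
      map_range_prefix_map_range x (le_max_right j k)⟩
  exists_approx_eq x j u h := by
    refine ⟨u.length, ?_⟩
    have hlen : u.length ≤ j := by simpa using h.length_le
    rw [List.prefix_iff_eq_take.1 h, ← List.map_take, List.take_range, min_eq_left hlen]
    simp
  exists_limit c hc := by
    classical
    refine ⟨fun i => if h : ∃ k, i < (c k).length then (c h.choose)[i]'h.choose_spec else default,
      fun k => ⟨(c k).length, List.ext_getElem (by simp) fun i h₁ h₂ => ?_⟩⟩
    have hex : ∃ k', i < (c k').length := ⟨k, h₂⟩
    simp only [List.getElem_map, List.getElem_range, dif_pos hex]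
    rcases le_total hex.choose k with hle | hle
    · exact (prefix_of_le_of_chain hc hle).getElem hex.choose_spec
    · exact ((prefix_of_le_of_chain hc hle).getElem h₂).symm

section listFrame

variable {α : Type} [Inhabited α]

theorem listFrame_apply_eq_getElem {x : ℕ → α} {w : List α} (hx : (listFrame α).Extends x w)
    {i : ℕ} (hi : i < w.length) : x i = w[i] := by
  obtain ⟨j, rfl⟩ := hx
  simp

theorem listFrame_range_eq {S : Set α} (hS : S.Nonempty) {c : ℕ → List α} {x : ℕ → α}
    (hx : ∀ s, (listFrame α).Extends x (c s)) (hc : ∀ s, c s <+: c (s + 1))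
    (hcS : ∀ s, ∀ r ∈ c s, r ∈ S) (happ : ∀ r ∈ S, ∀ s₀, ∃ s, s₀ ≤ s ∧ c (s + 1) = c s ++ [r]) :
    range x = S := by
  have hlen : ∀ L, ∃ s, L ≤ (c s).length := by
    intro L
    induction L with
    | zero => exact ⟨0, Nat.zero_le _⟩
    | succ L ih =>
      obtain ⟨s, hs⟩ := ih
      obtain ⟨s', hss', hs'⟩ := happ _ hS.some_mem s
      refine ⟨s' + 1, ?_⟩
      have := (prefix_of_le_of_chain hc hss').length_le
      rw [hs', List.length_append, List.length_singleton]
      omega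
  ext r
  constructor
  · rintro ⟨i, rfl⟩
    obtain ⟨s, hs⟩ := hlen (i + 1)
    rw [listFrame_apply_eq_getElem (hx s) hs]
    exact hcS s _ (List.getElem_mem _)
  · intro hr
    obtain ⟨s, -, hs⟩ := happ r hr 0
    have hxs := hx (s + 1)
    rw [hs] at hxs
    exact ⟨(c s).length, (listFrame_apply_eq_getElem hxs (by simp)).trans (by simp)⟩

theorem listFrame_hasBaireProperty_apply_mem (n : ℕ) (s : Set α) :
    (listFrame α).HasBaireProperty {x | x n ∈ s} := by
  intro w
  let w' := w ++ List.replicate (n + 1 - w.length) default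
  have hn : n < w'.length := by simp only [w', List.length_append, List.length_replicate]; omega
  refine ⟨w', List.prefix_append _ _, ?_⟩
  by_cases h : w'[n] ∈ s
  · exact Or.inl (comeagerBelow_of_forall_extends fun x hx =>
      show x n ∈ s from listFrame_apply_eq_getElem hx hn ▸ h)
  · exact Or.inr (comeagerBelow_of_forall_extends fun x hx =>
      show x n ∉ s from listFrame_apply_eq_getElem hx hn ▸ h)

theorem measurable_id_listFrame [MeasurableSpace α] :
    Measurable[(listFrame α).baireSigma] (id : (ℕ → α) → ℕ → α) :=
  (@measurable_pi_iff _ _ _ (listFrame α).baireSigma _ id).2 fun n _ _ =>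
    listFrame_hasBaireProperty_apply_mem n _

end listFrame

@[reducible] def prod (F G : ForcingFrame) : ForcingFrame where
  Cond := F.Cond × G.Cond
  Pt := F.Pt × G.Pt
  Le u v := F.Le u.1 v.1 ∧ G.Le u.2 v.2
  le_refl u := ⟨F.le_refl u.1, G.le_refl u.2⟩
  le_trans h₁ h₂ := ⟨F.le_trans h₁.1 h₂.1, G.le_trans h₁.2 h₂.2⟩
  approx x k := (F.approx x.1 k.unpair.1, G.approx x.2 k.unpair.2)
  approx_directed x j k := by
    obtain ⟨l₁, h₁j, h₁k⟩ := F.approx_directed x.1 j.unpair.1 k.unpair.1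
    obtain ⟨l₂, h₂j, h₂k⟩ := G.approx_directed x.2 j.unpair.2 k.unpair.2
    exact ⟨Nat.pair l₁ l₂, by simpa [Nat.unpair_pair] using ⟨⟨h₁j, h₂j⟩, h₁k, h₂k⟩⟩
  exists_approx_eq x j u h := by
    obtain ⟨l₁, h₁⟩ := F.exists_approx_eq x.1 j.unpair.1 u.1 h.1
    obtain ⟨l₂, h₂⟩ := G.exists_approx_eq x.2 j.unpair.2 u.2 h.2
    exact ⟨Nat.pair l₁ l₂, by simp [Nat.unpair_pair, h₁, h₂]⟩
  exists_limit c hc := by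
    obtain ⟨x₁, hx₁⟩ := F.exists_limit (fun k => (c k).1) fun k => (hc k).1
    obtain ⟨x₂, hx₂⟩ := G.exists_limit (fun k => (c k).2) fun k => (hc k).2
    refine ⟨(x₁, x₂), fun k => ?_⟩
    obtain ⟨j₁, h₁⟩ := hx₁ k
    obtain ⟨j₂, h₂⟩ := hx₂ k
    exact ⟨Nat.pair j₁ j₂, by simp [Nat.unpair_pair, h₁, h₂]⟩

section prod

variable {F G : ForcingFrame} {x : F.Pt × G.Pt} {w : F.Cond × G.Cond}

theorem Extends.fst (h : (F.prod G).Extends x w) : F.Extends x.1 w.1 :=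
  let ⟨j, hj⟩ := h
  ⟨j.unpair.1, congrArg Prod.fst hj⟩

theorem Extends.snd (h : (F.prod G).Extends x w) : G.Extends x.2 w.2 :=
  let ⟨j, hj⟩ := h
  ⟨j.unpair.2, congrArg Prod.snd hj⟩

theorem ComeagerBelow.preimage_fst {A : Set F.Pt} {v₁ : F.Cond} (h : F.ComeagerBelow A v₁)
    (v₂ : G.Cond) : (F.prod G).ComeagerBelow (Prod.fst ⁻¹' A) (v₁, v₂) := by
  obtain ⟨D, hD, hA⟩ := h
  refine ⟨fun k => {c | c.1 ∈ D k}, fun k u hu => ?_, fun z hz hm => ?_⟩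
  · obtain ⟨u₁, hu₁, hu₁D⟩ := hD k u.1 hu.1
    exact ⟨(u₁, u.2), ⟨hu₁, G.le_refl u.2⟩, hu₁D⟩
  · exact hA z.1 hz.fst fun k => let ⟨j, hj⟩ := hm k; ⟨j.unpair.1, hj⟩

theorem ComeagerBelow.preimage_snd {A : Set G.Pt} {v₂ : G.Cond} (h : G.ComeagerBelow A v₂)
    (v₁ : F.Cond) : (F.prod G).ComeagerBelow (Prod.snd ⁻¹' A) (v₁, v₂) := by
  obtain ⟨D, hD, hA⟩ := h
  refine ⟨fun k => {c | c.2 ∈ D k}, fun k u hu => ?_, fun z hz hm => ?_⟩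
  · obtain ⟨u₂, hu₂, hu₂D⟩ := hD k u.2 hu.2
    exact ⟨(u.1, u₂), ⟨F.le_refl u.1, hu₂⟩, hu₂D⟩
  · exact hA z.2 hz.snd fun k => let ⟨j, hj⟩ := hm k; ⟨j.unpair.2, hj⟩

theorem HasBaireProperty.preimage_fst {A : Set F.Pt} (hA : F.HasBaireProperty A) :
    (F.prod G).HasBaireProperty (Prod.fst ⁻¹' A) := fun w =>
  let ⟨w₁, hw₁, h⟩ := hA w.1
  ⟨(w₁, w.2), ⟨hw₁, G.le_refl w.2⟩, h.imp (·.preimage_fst w.2) (·.preimage_fst w.2)⟩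

theorem HasBaireProperty.preimage_snd {A : Set G.Pt} (hA : G.HasBaireProperty A) :
    (F.prod G).HasBaireProperty (Prod.snd ⁻¹' A) := fun w =>
  let ⟨w₂, hw₂, h⟩ := hA w.2
  ⟨(w.1, w₂), ⟨F.le_refl w.1, hw₂⟩, h.imp (·.preimage_snd w.1) (·.preimage_snd w.1)⟩

theorem ComeagerBelow.of_preimage_fst {A : Set F.Pt} (hA : F.HasBaireProperty A)
    (h : (F.prod G).ComeagerBelow (Prod.fst ⁻¹' A) w) : F.ComeagerBelow A w.1 := by
  refine comeagerBelow_of_dense fun v hv => ?_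
  obtain ⟨u, huv, hu⟩ := hA v
  refine ⟨u, huv, hu.resolve_right fun hc => ?_⟩
  have h' : (F.prod G).ComeagerBelow (Prod.fst ⁻¹' A) (u, w.2) :=
    h.of_le ⟨F.le_trans huv hv, G.le_refl w.2⟩
  exact h'.not_compl (by simpa only [preimage_compl] using hc.preimage_fst w.2)

theorem exists_mem_of_comeagerBelow_prod {E : Set (F.Pt × G.Pt)} {A : Set F.Pt} {A' : Set G.Pt}
    (hA : F.HasBaireProperty A) (hE : (F.prod G).ComeagerBelow E w) {q : F.Cond × G.Cond}
    (hqw : (F.prod G).Le q w) (hq : (F.prod G).ComeagerBelow (Prod.fst ⁻¹' A) q) {v : G.Cond}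
    (hvw : G.Le v w.2) (hv : G.ComeagerBelow A' v) : ∃ z ∈ E, z.1 ∈ A ∧ z.2 ∈ A' := by
  have hE' : (F.prod G).ComeagerBelow E (q.1, v) := hE.of_le ⟨hqw.1, hvw⟩
  obtain ⟨z, -, hzE, hzA, hzA'⟩ :=
    (hE'.inter (((hq.of_preimage_fst hA).preimage_fst v).inter (hv.preimage_snd q.1))).exists_mem
  exact ⟨z, hzE, hzA, hzA'⟩

end prod

theorem measurable_id_prod_listFrame {α β : Type} [Inhabited α] [Inhabited β]
    [MeasurableSpace α] [MeasurableSpace β] :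
    Measurable[((listFrame α).prod (listFrame β)).baireSigma]
      (id : (ℕ → α) × (ℕ → β) → (ℕ → α) × (ℕ → β)) :=
  @Measurable.prodMk _ _ _ (_) _ _ _ _
    (measurable_id_listFrame.comp fun _ hA => hA.preimage_fst)
    (measurable_id_listFrame.comp fun _ hA => hA.preimage_snd)

end ForcingFrame

namespace FriedmanAntidiagonal

open ForcingFrame

abbrev pairFrame : ForcingFrame := (listFrame (ℕ → Bool)).prod (listFrame (ℕ → Bool))

def entries (p : pairFrame.Cond) : Set (ℕ → Bool) := {r | r ∈ p.1 ++ p.2}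

def condsOver (T : Set (ℕ → Bool)) : Set pairFrame.Cond := {p | entries p ⊆ T}

theorem entries_finite (p : pairFrame.Cond) : (entries p).Finite := List.finite_toSet _

theorem condsOver_mono : Monotone condsOver := fun _ _ hT _ hp => hp.trans hT

theorem condsOver_countable {T : Set (ℕ → Bool)} (hT : T.Countable) : (condsOver T).Countable := by
  have := hT.to_subtype
  refine (countable_range fun l : List T × List T => (l.1.map (↑), l.2.map (↑))).mono ?_
  rintro ⟨l₁, l₂⟩ hl
  have h₁ : ∀ r ∈ l₁, r ∈ T := fun r hr => hl (List.mem_append_left _ hr)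
  have h₂ : ∀ r ∈ l₂, r ∈ T := fun r hr => hl (List.mem_append_right _ hr)
  lift l₁ to List T using h₁
  lift l₂ to List T using h₂
  exact ⟨(l₁, l₂), rfl⟩

section appendTask

variable (S : Set (ℕ → Bool))

def appendTask : S ⊕ S → pairFrame.Cond → pairFrame.Cond
  | .inl r, p => (p.1 ++ [r.1], p.2)
  | .inr r, p => (p.1, p.2 ++ [r.1])

theorem appendTask_le (t : S ⊕ S) (p : pairFrame.Cond) : pairFrame.Le (appendTask S t p) p := by
  cases t
  exacts [⟨List.prefix_append _ _, List.prefix_refl _⟩,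
    ⟨List.prefix_refl _, List.prefix_append _ _⟩]

theorem appendTask_mem (t : S ⊕ S) {p : pairFrame.Cond} (hp : p ∈ condsOver S) :
    appendTask S t p ∈ condsOver S := by
  have hp' : ∀ r ∈ p.1 ++ p.2, r ∈ S := hp
  rcases t with ⟨r, hr⟩ | ⟨r, hr⟩ <;> intro r' hr' <;> simp only [entries, appendTask] at hr' <;>
    grind

end appendTask

theorem range_eq_of_appendTask {S : Set (ℕ → Bool)} (hS : S.Nonempty) {c : ℕ → pairFrame.Cond}
    (hcS : ∀ s, c s ∈ condsOver S) (hc : ∀ s, pairFrame.Le (c (s + 1)) (c s))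
    (happ : ∀ t s₀, ∃ s, s₀ ≤ s ∧ c (s + 1) = appendTask S t (c s)) {x : pairFrame.Pt}
    (hx : ∀ s, pairFrame.Extends x (c s)) : range x.1 = S ∧ range x.2 = S :=
  ⟨listFrame_range_eq hS (fun s => (hx s).fst) (fun s => (hc s).1)
      (fun s _ hr => hcS s (List.mem_append_left _ hr)) fun r hr s₀ =>
      let ⟨s, hs, h⟩ := happ (.inl ⟨r, hr⟩) s₀
      ⟨s, hs, congrArg Prod.fst h⟩,
    listFrame_range_eq hS (fun s => (hx s).snd) (fun s => (hc s).2)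
      (fun s _ hr => hcS s (List.mem_append_right _ hr)) fun r hr s₀ =>
      let ⟨s, hs, h⟩ := happ (.inr ⟨r, hr⟩) s₀
      ⟨s, hs, congrArg Prod.snd h⟩⟩

variable (f : (ℕ → ℕ → Bool) → ℕ → ℕ → Bool)

def bitSet (n : ℕ) (b : Bool) : Set pairFrame.Pt := {z | f z.1 0 n = b}

def matchSet (m : ℕ) : Set pairFrame.Pt := {z | f z.1 0 = f z.2 m}

def genericSets : Set (Set pairFrame.Pt) :=
  range (fun nb : ℕ × Bool => bitSet f nb.1 nb.2) ∪ range (matchSet f) ∪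
    range fun m => (matchSet f m)ᶜ

theorem genericSets_countable : (genericSets f).Countable :=
  ((countable_range _).union (countable_range _)).union (countable_range _)

theorem compl_mem_genericSets {B : Set pairFrame.Pt} (hB : B ∈ genericSets f) :
    Bᶜ ∈ genericSets f := by
  rcases hB with (⟨⟨n, b⟩, rfl⟩ | ⟨m, rfl⟩) | ⟨m, rfl⟩
  · refine Or.inl (Or.inl ⟨(n, !b), ?_⟩)
    ext z
    cases b <;> simp [bitSet]
  · exact Or.inr ⟨m, rfl⟩
  · exact Or.inl (Or.inr ⟨m, (compl_compl _).symm⟩)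

theorem hasBaireProperty_of_mem_genericSets (hf : Measurable f) {B : Set pairFrame.Pt}
    (hB : B ∈ genericSets f) : pairFrame.HasBaireProperty B := by
  refine measurable_id_prod_listFrame ?_
  rcases hB with (⟨⟨n, b⟩, rfl⟩ | ⟨m, rfl⟩) | ⟨m, rfl⟩
  · exact measurableSet_eq_fun (by fun_prop) (by fun_prop)
  · exact measurableSet_eq_fun (by fun_prop) (by fun_prop)
  · exact (measurableSet_eq_fun (by fun_prop) (by fun_prop)).compl

open Classical in
noncomputable def forcedValue (p : pairFrame.Cond) : ℕ → Bool := fun n =>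
  decide (∃ q, pairFrame.Le q p ∧ pairFrame.ComeagerBelow (bitSet f n true) q)

/-- Below a condition forcing `f z.1 0 = f z.2 m`, the bits of `f z.1 0` are decided by
conditions on `z.2` alone, so no two extensions can force different values. -/
theorem forcedValue_eq (hf : Measurable f) {p q : pairFrame.Cond} {m n : ℕ} {b : Bool}
    (hp : pairFrame.ComeagerBelow (matchSet f m) p) (hqp : pairFrame.Le q p)
    (hq : pairFrame.ComeagerBelow (bitSet f n b) q) : forcedValue f p n = b := by
  have hBP : ∀ k b', (listFrame (ℕ → Bool)).HasBaireProperty {y | f y k n = b'} := fun k b' =>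
    measurable_id_listFrame
      (measurableSet_eq_fun (f := fun y => f y k n) (g := fun _ => b') (by fun_prop) (by fun_prop))
  obtain ⟨v, hvp, j, hj⟩ : ∃ v, (listFrame (ℕ → Bool)).Le v p.2 ∧
      ∃ j, (listFrame (ℕ → Bool)).ComeagerBelow {y | f y m n = j} v := by
    obtain ⟨v, hvp, hv⟩ := hBP m true p.2
    refine ⟨v, hvp, hv.elim (⟨true, ·⟩) fun h => ⟨false, h.mono fun y hy => ?_⟩⟩
    simpa using hy
  have hunique : ∀ q', pairFrame.Le q' p → ∀ i, pairFrame.ComeagerBelow (bitSet f n i) q' →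
      i = j := by
    intro q' hq'p i hi
    obtain ⟨z, hz, hzi, hzj⟩ := exists_mem_of_comeagerBelow_prod (hBP 0 i) hp hq'p hi hvp hj
    exact hzi.symm.trans ((congrFun hz n).trans hzj)
  rw [hunique q hqp b hq]
  cases j
  · simp only [forcedValue, decide_eq_false_iff_not]
    exact fun ⟨q', hq'p, h⟩ => Bool.noConfusion (hunique q' hq'p true h)
  · simp only [forcedValue, decide_eq_true_eq]
    exact ⟨q, hqp, hunique q hqp b hq ▸ hq⟩

noncomputable def witnessReals (p w : pairFrame.Cond) : Set (ℕ → Bool) :=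
  insert (forcedValue f p) (⋃ B ∈ genericSets f,
    entries (pairFrame.decision B p) ∪ ⋃ k, entries (pairFrame.denseStep B w k p))

noncomputable def closureStep (T : Set (ℕ → Bool)) : Set (ℕ → Bool) :=
  ⋃ p ∈ condsOver T, ⋃ w ∈ condsOver T, witnessReals f p w

theorem closureStep_mono : Monotone (closureStep f) := fun _ _ hT =>
  biUnion_mono (condsOver_mono hT) fun _ _ => biUnion_mono (condsOver_mono hT) fun _ _ => le_rfl

theorem closureStep_countable {T : Set (ℕ → Bool)} (hT : T.Countable) :
    (closureStep f T).Countable := by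
  refine (condsOver_countable hT).biUnion fun p _ => (condsOver_countable hT).biUnion fun w _ => ?_
  refine ((genericSets_countable f).biUnion fun B _ => ?_).insert _
  exact (entries_finite _).countable.union (countable_iUnion fun k => (entries_finite _).countable)

theorem exists_finite_of_mem_closureStep {T : Set (ℕ → Bool)} {r : ℕ → Bool}
    (hr : r ∈ closureStep f T) : ∃ s ⊆ T, s.Finite ∧ r ∈ closureStep f s := by
  simp only [closureStep, mem_iUnion] at hr
  obtain ⟨p, hp, w, hw, hr⟩ := hr
  refine ⟨entries p ∪ entries w, union_subset hp hw,
    (entries_finite p).union (entries_finite w), ?_⟩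
  simp only [closureStep, mem_iUnion]
  exact ⟨p, subset_union_left, w, subset_union_right, hr⟩

section closed

variable {f} {S : Set (ℕ → Bool)} (hS : closureStep f S ⊆ S) {p w : pairFrame.Cond}
include hS

theorem witnessReals_subset (hp : p ∈ condsOver S) (hw : w ∈ condsOver S) :
    witnessReals f p w ⊆ S :=
  fun _ hr => hS (mem_biUnion hp (mem_biUnion hw hr))

theorem forcedValue_mem (hp : p ∈ condsOver S) : forcedValue f p ∈ S :=
  witnessReals_subset hS hp hp (mem_insert _ _)

theorem decision_mem_condsOver {B : Set pairFrame.Pt} (hB : B ∈ genericSets f)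
    (hp : p ∈ condsOver S) : pairFrame.decision B p ∈ condsOver S :=
  fun _ hr => witnessReals_subset hS hp hp (mem_insert_of_mem _ (mem_biUnion hB (Or.inl hr)))

theorem denseStep_mem_condsOver {B : Set pairFrame.Pt} (hB : B ∈ genericSets f)
    (hw : w ∈ condsOver S) (k : ℕ) (hp : p ∈ condsOver S) :
    pairFrame.denseStep B w k p ∈ condsOver S :=
  fun _ hr => witnessReals_subset hS hp hw
    (mem_insert_of_mem _ (mem_biUnion hB (Or.inr (mem_iUnion.2 ⟨k, hr⟩))))

end closed

theorem exists_apply_zero_mem_range (hf : Measurable f)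
    (hinv : ∀ x x', range x = range x' → range (f x) = range (f x')) : ∃ x, f x 0 ∈ range x := by
  obtain ⟨S, hS₀, hS, hSclosed⟩ := exists_countable_closure (closureStep f) (closureStep_mono f)
    (fun _ => closureStep_countable f) (fun _ _ => exists_finite_of_mem_closureStep f)
    (countable_singleton fun _ => false)
  have := hS.to_subtype
  obtain ⟨c, hcS, hcle, happ, hgeneric⟩ := pairFrame.exists_generic_chain (genericSets_countable f)
    (fun _ => compl_mem_genericSets f) (fun _ => hasBaireProperty_of_mem_genericSets f hf)
    (condsOver_countable hS) (fun _ hB _ => decision_mem_condsOver hSclosed hB)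
    (fun _ hB _ hw k _ => denseStep_mem_condsOver hSclosed hB hw k) (appendTask S) (appendTask_le S) (fun t _ => appendTask_mem S t) (p₀ := ([], []))
    (by simp [condsOver, entries])
  have hcle' : ∀ s, pairFrame.Le (c (s + 1)) (c s) := fun s => hcle s (s + 1) s.le_succ
  obtain ⟨x, hx⟩ := pairFrame.exists_limit c hcle'
  obtain ⟨hx₁, hx₂⟩ := range_eq_of_appendTask ⟨_, hS₀ rfl⟩ hcS hcle' happ hx
  obtain ⟨m, hm⟩ : f x.1 0 ∈ range (f x.2) := hinv _ _ (hx₁.trans hx₂.symm) ▸ mem_range_self 0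
  obtain ⟨s, hs⟩ := hgeneric x hx (matchSet f m) (Or.inl (Or.inr ⟨m, rfl⟩)) hm.symm
  have hval : forcedValue f (c s) = f x.1 0 := funext fun n => by
    obtain ⟨s', hs'⟩ :=
      hgeneric x hx (bitSet f n (f x.1 0 n)) (Or.inl (Or.inl ⟨(n, _), rfl⟩)) rfl
    exact forcedValue_eq f hf hs (hcle s (max s s') (le_max_left _ _))
      (hs'.of_le (hcle s' _ (le_max_right _ _)))
  exact ⟨x.1, hx₁ ▸ hval ▸ forcedValue_mem hSclosed (hcS s)⟩

end FriedmanAntidiagonal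

theorem measure_singleton_eq_zero_of_cylinder {μ : Measure (ℕ → Bool)}
    (hμ : ∀ (s : Finset ℕ) (f : ℕ → Bool),
      μ {y | ∀ n ∈ s, y n = f n} = (2 : ENNReal)⁻¹ ^ s.card) (r : ℕ → Bool) : μ {r} = 0 := by
  have hlim : Filter.Tendsto (fun k => (2 : ENNReal)⁻¹ ^ k) Filter.atTop (nhds 0) :=
    ENNReal.tendsto_pow_atTop_nhds_zero_iff.2 (by norm_num)
  refine le_antisymm (ge_of_tendsto' hlim fun k => ?_) bot_le
  calc μ {r} ≤ μ {y | ∀ n ∈ Finset.range k, y n = r n} :=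
        measure_mono fun y (hy : y = r) => by simp [hy]
    _ = (2 : ENNReal)⁻¹ ^ k := by rw [hμ, Finset.card_range]

/-- Let `E_ctble` on `X = (2^ℕ)^ℕ` be `x E y ⟺ range x = range y` and
`P(x,y) ⟺ y ∉ range x`. Then `P` is `E_ctble`-invariant with `μ`-conull sections (for the
uniform product measure `μ` on `2^ℕ`), but `P` has no Borel `E_ctble`-invariant countable
uniformization. -/
theorem stmt15 (μ : Measure (ℕ → Bool)) [IsProbabilityMeasure μ]
    (hμ : ∀ (s : Finset ℕ) (f : ℕ → Bool),
      μ {y | ∀ n ∈ s, y n = f n} = (2 : ENNReal)⁻¹ ^ s.card) :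
    (∀ x x' : ℕ → (ℕ → Bool), Set.range x = Set.range x' →
      ∀ y : ℕ → Bool, (y ∉ Set.range x ↔ y ∉ Set.range x')) ∧
    (∀ x : ℕ → (ℕ → Bool), μ {y | y ∉ Set.range x} = 1) ∧
    ¬ ∃ f : (ℕ → (ℕ → Bool)) → ℕ → (ℕ → Bool), Measurable f ∧
        (∀ x n, f x n ∉ Set.range x) ∧
        ∀ x x', Set.range x = Set.range x' → Set.range (f x) = Set.range (f x') := by
  have : NullSingletonClass μ := ⟨measure_singleton_eq_zero_of_cylinder hμ⟩
  refine ⟨fun x x' h y => by rw [h], fun x => ?_, fun ⟨f, hf, havoid, hinv⟩ => ?_⟩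
  · have hnull : μ (range x) = 0 := (countable_range x).measure_zero μ
    exact (prob_compl_eq_one_iff₀ (NullMeasurableSet.of_null hnull)).2 hnull
  · obtain ⟨x, hx⟩ := FriedmanAntidiagonal.exists_apply_zero_mem_range f hf hinv
    exact havoid x 0 hx
end

section
/- Let E be a Borel equivalence relation on a Polish space X which is Borel reducible to a Borel equivalence relation F on a Polish space Y all of whose classes are Kσ, but which is not Borel reducible to any countable Borel equivalence relation. Then the set P ⊆ X × Y defined by P(x, y) iff g(x) F y (where g is the reduction) is E-invariant with Kσ sections but admits no Borel E-invariant countable uniformization. -/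
/-!
Suppose `f` were a Borel `E`-invariant countable uniformization of `P`, and let `A` be the
analytic set `⋃ₓ range (f x)`. Invariance gives `y ∈ range (f x)` whenever `y ∈ A` and
`F (g x) y`, so `A` is disjoint from the analytic projection of
`{(x, y) | F (g x) y, y ∉ range (f x)}`; a Borel set `B ⊇ A` separating the two meets the
`F`-class of every point of `A` in a countable set. By the perfect set theorem, the points whose
`F`-class meets `B` uncountably form an analytic set, disjoint from `A`; separating again yields
a Borel `B' ⊇ A` meeting every `F`-class countably. Then `x ↦ f x 0` reduces `E` to the
countable Borel equivalence relation "equal, or `F`-related inside `B'`", which is excluded.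
-/

open Set MeasureTheory Filter Topology

theorem not_countable_nat_bool : ¬ Countable (ℕ → Bool) := by
  rw [← Cardinal.mk_le_aleph0_iff]
  simp [Cardinal.aleph0_lt_continuum]

/-- A Cantor scheme of closed balls `closedBall (c t) (r t)` indexed by binary words, with the
newest letter at the head of the list as in `PiNat.res`. Each condition is closed or open in
`(c, r)`, so the schemes form a Borel subset of a Polish space. -/
structure IsBallScheme {Γ : Type*} [PseudoMetricSpace Γ] (c : List Bool → Γ)
    (r : List Bool → ℝ) : Prop where
  radius_nonneg : ∀ t, 0 ≤ r t
  radius_le : ∀ t, r t ≤ (1 / 2) ^ t.length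
  closedBall_subset : ∀ t b, r (b :: t) + dist (c (b :: t)) (c t) ≤ r t
  disjoint : ∀ t, r (false :: t) + r (true :: t) < dist (c (false :: t)) (c (true :: t))

section BallScheme

variable {Γ : Type*}

theorem isBallScheme_iff [PseudoMetricSpace Γ] {c : List Bool → Γ} {r : List Bool → ℝ} :
    IsBallScheme c r ↔ (∀ t, 0 ≤ r t) ∧ (∀ t, r t ≤ (1 / 2) ^ t.length) ∧
      (∀ t b, r (b :: t) + dist (c (b :: t)) (c t) ≤ r t) ∧
      ∀ t, r (false :: t) + r (true :: t) < dist (c (false :: t)) (c (true :: t)) :=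
  ⟨fun ⟨h₁, h₂, h₃, h₄⟩ => ⟨h₁, h₂, h₃, h₄⟩, fun ⟨h₁, h₂, h₃, h₄⟩ => ⟨h₁, h₂, h₃, h₄⟩⟩

theorem IsBallScheme.not_countable [MetricSpace Γ] [CompleteSpace Γ] {c : List Bool → Γ}
    {r : List Bool → ℝ} (h : IsBallScheme c r) {C : Set Γ} (hC : IsClosed C)
    (hcC : ∀ t, c t ∈ C) : ¬ C.Countable := by
  set D : List Bool → Set Γ := fun t => Metric.closedBall (c t) (r t) ∩ C
  have hanti : CantorScheme.ClosureAntitone D :=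
    CantorScheme.Antitone.closureAntitone
      (fun t b => inter_subset_inter_left _
        (Metric.closedBall_subset_closedBall' (h.closedBall_subset t b)))
      (fun t => Metric.isClosed_closedBall.inter hC)
  have hdisj : CantorScheme.Disjoint D := by
    intro t a b hab
    refine Disjoint.mono inter_subset_left inter_subset_left ?_
    cases a <;> cases b <;> simp only [ne_eq, not_true_eq_false] at hab
    · exact Metric.closedBall_disjoint_closedBall (h.disjoint t)
    · exact (Metric.closedBall_disjoint_closedBall (h.disjoint t)).symm
  have hdiam : CantorScheme.VanishingDiam D := by
    intro x
    have hlim : Tendsto (fun n : ℕ => ENNReal.ofReal (2 * (1 / 2) ^ n)) atTop (𝓝 0) := by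
      simpa using ENNReal.tendsto_ofReal
        ((tendsto_pow_atTop_nhds_zero_of_lt_one (r := (1 / 2 : ℝ)) (by norm_num)
          (by norm_num)).const_mul 2)
    refine tendsto_of_tendsto_of_tendsto_of_le_of_le tendsto_const_nhds hlim (fun _ => bot_le)
      fun n => Metric.ediam_le_of_forall_dist_le fun y hy z hz => ?_
    have hr := h.radius_le (PiNat.res x n)
    rw [PiNat.res_length] at hr
    have := dist_triangle_right y z (c (PiNat.res x n))
    linarith [Metric.mem_closedBall.1 hy.1, Metric.mem_closedBall.1 hz.1]
  have hdom := hanti.map_of_vanishingDiam hdiam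
    fun t => ⟨c t, Metric.mem_closedBall_self (h.radius_nonneg t), hcC t⟩
  let ψ : (ℕ → Bool) → (CantorScheme.inducedMap D).1 := fun x => ⟨x, hdom ▸ mem_univ x⟩
  let φ : (ℕ → Bool) → C := fun x =>
    ⟨(CantorScheme.inducedMap D).2 (ψ x), (CantorScheme.map_mem (ψ x) 0).2⟩
  have hφ : Function.Injective φ := fun x y hxy =>
    congrArg Subtype.val (hdisj.map_injective (congrArg Subtype.val hxy :))
  exact fun hcount => not_countable_nat_bool (@hφ.countable _ _ hcount.to_subtype)

theorem Perfect.exists_isBallScheme [MetricSpace Γ] {D : Set Γ} (hD : Perfect D)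
    (hne : D.Nonempty) : ∃ c r, IsBallScheme c r ∧ ∀ t, c t ∈ D := by
  let S := {z : Γ × ℝ // z.1 ∈ D ∧ 0 < z.2}
  have split : ∀ z : S, ∃ w : Bool → S,
      (∀ b, (w b).1.2 ≤ z.1.2 / 2 ∧ (w b).1.2 + dist (w b).1.1 z.1.1 ≤ z.1.2) ∧
      (w false).1.2 + (w true).1.2 < dist (w false).1.1 (w true).1.1 := by
    rintro ⟨⟨p, ρ⟩, hp, hρ⟩
    obtain ⟨p', ⟨hp'p, hp'D⟩, hp'ne⟩ :=
      accPt_iff_nhds.1 (hD.acc p hp) _ (Metric.ball_mem_nhds p (half_pos hρ))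
    have hδ : 0 < dist p' p := dist_pos.2 hp'ne
    have hp'p : dist p' p < ρ / 2 := hp'p
    set ρ' := min (ρ / 2) (dist p' p / 3)
    have hρ' : 0 < ρ' := lt_min (half_pos hρ) (by positivity)
    refine ⟨fun b => ⟨(cond b p' p, ρ'), by cases b <;> assumption, hρ'⟩,
      fun b => ⟨min_le_left _ _, ?_⟩, ?_⟩
    · have := min_le_left (ρ / 2) (dist p' p / 3)
      cases b <;> simp only [cond_true, cond_false, dist_self] <;> linarith
    · simp only [cond_true, cond_false, dist_comm p p']
      linarith [min_le_right (ρ / 2) (dist p' p / 3)]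
  choose next hnext hsep using split
  obtain ⟨p₀, hp₀⟩ := hne
  let node : List Bool → S := fun t => t.rec ⟨(p₀, 1), hp₀, one_pos⟩ fun b _ z => next z b
  refine ⟨fun t => (node t).1.1, fun t => (node t).1.2,
    ⟨fun t => (node t).2.2.le, fun t => ?_, fun t b => (hnext _ b).2, fun t => hsep _⟩,
    fun t => (node t).2.1⟩
  induction t with
  | nil => simp [node]
  | cons b t ih =>
    calc (node (b :: t)).1.2 ≤ (node t).1.2 / 2 := (hnext _ b).1
      _ ≤ (1 / 2) ^ (b :: t).length := by rw [List.length_cons, pow_succ]; linarith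

end BallScheme

/-- By the perfect set theorem, `C ∩ q ⁻¹' {a}` is uncountable iff it contains the centres of a
ball scheme; so this set is the projection of a Borel set of schemes. -/
theorem analyticSet_setOf_not_countable_inter_preimage {Γ A : Type*} [TopologicalSpace Γ]
    [PolishSpace Γ] [TopologicalSpace A] [T2Space A] {C : Set Γ} (hC : IsClosed C) {q : Γ → A}
    (hq : Continuous q) :
    AnalyticSet {a | ¬ (C ∩ q ⁻¹' {a}).Countable} := by
  let := TopologicalSpace.upgradeIsCompletelyMetrizable Γ
  let S : Set ((List Bool → Γ) × (List Bool → ℝ)) :=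
    {z | IsBallScheme z.1 z.2 ∧ (∀ t, z.1 t ∈ C) ∧ ∀ t, q (z.1 t) = q (z.1 [])}
  have hS : AnalyticSet S := by
    borelize ((List Bool → Γ) × (List Bool → ℝ))
    refine MeasurableSet.analyticSet (MeasurableSet.inter ?_ (MeasurableSet.inter ?_ ?_))
    · change MeasurableSet {z : (List Bool → Γ) × (List Bool → ℝ) | IsBallScheme z.1 z.2}
      simp only [isBallScheme_iff]
      measurability
    · have : IsClosed {z : (List Bool → Γ) × (List Bool → ℝ) | ∀ t, z.1 t ∈ C} := by
        simp only [ofPred_forall]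
        exact isClosed_iInter fun t => hC.preimage (by fun_prop)
      exact this.measurableSet
    · have : IsClosed
          {z : (List Bool → Γ) × (List Bool → ℝ) | ∀ t, q (z.1 t) = q (z.1 [])} := by
        simp only [ofPred_forall]
        exact isClosed_iInter fun t => isClosed_eq (by fun_prop) (by fun_prop)
      exact this.measurableSet
  convert hS.image_of_continuous (f := fun z => q (z.1 [])) (by fun_prop)
  ext a
  constructor
  · intro ha
    obtain ⟨D, hD, hDne, hDq⟩ := exists_perfect_nonempty_of_isClosed_of_not_countable
      (hC.inter (isClosed_singleton.preimage hq)) ha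
    obtain ⟨c, r, hcr, hcD⟩ := hD.exists_isBallScheme hDne
    exact ⟨(c, r), ⟨hcr, fun t => (hDq (hcD t)).1,
      fun t => (hDq (hcD t)).2.trans (hDq (hcD [])).2.symm⟩, (hDq (hcD [])).2⟩
  · rintro ⟨⟨c, r⟩, ⟨hcr, hcC, hqc⟩, rfl⟩
    exact hcr.not_countable (hC.inter (isClosed_singleton.preimage hq)) fun t => ⟨hcC t, hqc t⟩

theorem MeasurableSet.analyticSet_setOf_not_countable_preimage_prodMk {α β : Type*}
    [TopologicalSpace α] [PolishSpace α] [MeasurableSpace α] [BorelSpace α]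
    [TopologicalSpace β] [PolishSpace β] [MeasurableSpace β] [BorelSpace β]
    {W : Set (α × β)} (hW : MeasurableSet W) :
    AnalyticSet {a | ¬ (Prod.mk a ⁻¹' W).Countable} := by
  obtain ⟨τ, hτ, hτPolish, hWτ, -⟩ := hW.isClopenable
  have hfst : Continuous[τ, _] (Prod.fst : α × β → α) := continuous_le_dom hτ continuous_fst
  convert @analyticSet_setOf_not_countable_inter_preimage _ α τ hτPolish _ _ _ hWτ _ hfst
    using 4 with a
  have hfiber : W ∩ Prod.fst ⁻¹' {a} = Prod.mk a '' (Prod.mk a ⁻¹' W) := by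
    ext ⟨a', b⟩
    simp only [mem_inter_iff, mem_preimage, mem_singleton_iff, mem_image, Prod.mk.injEq]
    constructor
    · rintro ⟨hb, rfl⟩
      exact ⟨b, hb, rfl, rfl⟩
    · rintro ⟨b, hb, rfl, rfl⟩
      exact ⟨hb, rfl⟩
  rw [hfiber]
  exact ⟨fun h => h.image _,
    countable_of_injective_of_countable_image (Prod.mk_right_injective a).injOn⟩

theorem Equivalence.rel_iff_rel_of_rel {α : Type*} {r : α → α → Prop} (hr : Equivalence r)
    {a a' b b' : α} (ha : r a a') (hb : r b b') : r a b ↔ r a' b' :=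
  ⟨fun h => hr.trans (hr.symm ha) (hr.trans h hb),
    fun h => hr.trans ha (hr.trans h (hr.symm hb))⟩

def restrictRel {Y : Type*} (F : Y → Y → Prop) (B : Set Y) (y y' : Y) : Prop :=
  y = y' ∨ F y y' ∧ y ∈ B ∧ y' ∈ B

section RestrictRel

variable {Y : Type*} {F : Y → Y → Prop} {B : Set Y}

theorem Equivalence.restrictRel (hF : Equivalence F) (B : Set Y) :
    Equivalence (restrictRel F B) where
  refl _ := Or.inl rfl
  symm := by
    rintro _ _ (rfl | ⟨h, hy, hy'⟩)
    exacts [Or.inl rfl, Or.inr ⟨hF.symm h, hy', hy⟩]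
  trans := by
    rintro _ _ _ (rfl | ⟨h₁, hx, hy⟩) (rfl | ⟨h₂, hy', hz⟩)
    exacts [Or.inl rfl, Or.inr ⟨h₂, hy', hz⟩, Or.inr ⟨h₁, hx, hy⟩,
      Or.inr ⟨hF.trans h₁ h₂, hx, hz⟩]

theorem restrictRel_iff (hF : Equivalence F) {y y' : Y} (hy : y ∈ B) (hy' : y' ∈ B) :
    restrictRel F B y y' ↔ F y y' :=
  ⟨fun h => h.elim (fun h => h ▸ hF.refl y) And.left, fun h => Or.inr ⟨h, hy, hy'⟩⟩

theorem MeasurableSet.setOf_restrictRel [MeasurableSpace Y] [MeasurableEq Y]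
    (hF : MeasurableSet {p : Y × Y | F p.1 p.2}) (hB : MeasurableSet B) :
    MeasurableSet {p : Y × Y | restrictRel F B p.1 p.2} :=
  measurableSet_diagonal.union
    (hF.inter ((hB.preimage measurable_fst).inter (hB.preimage measurable_snd)))

theorem countable_setOf_restrictRel (hcount : ∀ y, {y' | F y y' ∧ y' ∈ B}.Countable) (y : Y) :
    {y' | restrictRel F B y y'}.Countable :=
  ((countable_singleton y).union (hcount y)).mono
    fun _ h => h.elim (fun h => Or.inl h.symm) fun h => Or.inr ⟨h.1, h.2.2⟩

end RestrictRel

section Uniformization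

variable {X Y : Type*} {F : Y → Y → Prop} {g : X → Y} {f : X → ℕ → Y}

theorem mem_range_of_rel_of_mem_range_uncurry (hF : Equivalence F)
    (hfF : ∀ x n, F (g x) (f x n))
    (hf : ∀ x x', F (g x) (g x') → range (f x) = range (f x')) {x : X} {y : Y}
    (hy : y ∈ range (Function.uncurry f)) (hxy : F (g x) y) : y ∈ range (f x) := by
  obtain ⟨⟨x₀, n₀⟩, rfl⟩ := hy
  rw [hf x x₀ (hF.trans hxy (hF.symm (hfF x₀ n₀)))]
  exact mem_range_self n₀

variable [TopologicalSpace X] [PolishSpace X] [MeasurableSpace X] [BorelSpace X]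
  [TopologicalSpace Y] [PolishSpace Y] [MeasurableSpace Y] [BorelSpace Y]

theorem MeasureTheory.AnalyticSet.exists_measurableSet_countable_classes (hF : Equivalence F)
    (hFm : MeasurableSet {p : Y × Y | F p.1 p.2}) {A B : Set Y} (hA : AnalyticSet A)
    (hB : MeasurableSet B) (hAB : A ⊆ B)
    (hcount : ∀ y ∈ A, {y' | F y y' ∧ y' ∈ B}.Countable) :
    ∃ B', MeasurableSet B' ∧ A ⊆ B' ∧ ∀ y, {y' | F y y' ∧ y' ∈ B'}.Countable := by
  have hW : MeasurableSet {p : Y × Y | F p.1 p.2 ∧ p.2 ∈ B} :=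
    hFm.inter (hB.preimage measurable_snd)
  obtain ⟨B₂, hAB₂, hdisj, hB₂⟩ := hA.measurablySeparable
    hW.analyticSet_setOf_not_countable_preimage_prodMk
    (disjoint_left.2 fun y hy hyN => hyN (hcount y hy))
  refine ⟨B ∩ B₂, hB.inter hB₂, subset_inter hAB hAB₂, fun y => ?_⟩
  rcases eq_empty_or_nonempty {y' | F y y' ∧ y' ∈ B ∩ B₂} with h | ⟨w, hyw, hwB, hwB₂⟩
  · exact h ▸ countable_empty
  have hw : {w' | F w w' ∧ w' ∈ B}.Countable := not_not.1 (disjoint_right.1 hdisj hwB₂)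
  refine hw.mono fun y' (h : F y y' ∧ y' ∈ B ∩ B₂) => ?_
  exact ⟨hF.trans (hF.symm hyw) h.1, h.2.1⟩

theorem analyticSet_range_uncurry (hf : Measurable f) :
    AnalyticSet (range (Function.uncurry f)) := by
  rw [← image_univ]
  exact MeasurableSet.univ.analyticSet_image
    (measurable_from_prod_countable_left fun n => (measurable_pi_apply n).comp hf)

theorem exists_measurableSet_countable_classes_of_uniformization (hF : Equivalence F)
    (hFm : MeasurableSet {p : Y × Y | F p.1 p.2}) (hg : Measurable g) (hfm : Measurable f)
    (hfF : ∀ x n, F (g x) (f x n))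
    (hf : ∀ x x', F (g x) (g x') → range (f x) = range (f x')) :
    ∃ B, MeasurableSet B ∧ range (Function.uncurry f) ⊆ B ∧
      ∀ y ∈ range (Function.uncurry f), {y' | F y y' ∧ y' ∈ B}.Countable := by
  have hV : MeasurableSet {p : X × Y | F (g p.1) p.2 ∧ p.2 ∉ range (f p.1)} := by
    have hcompl : {p : X × Y | p.2 ∉ range (f p.1)} = ⋂ n, {p | f p.1 n = p.2}ᶜ := by
      ext
      simp
    have hnot : MeasurableSet {p : X × Y | p.2 ∉ range (f p.1)} := hcompl ▸
      MeasurableSet.iInter fun n => (measurableSet_eq_fun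
        ((measurable_pi_apply n).comp (hfm.comp measurable_fst)) measurable_snd).compl
    exact (hFm.preimage ((hg.comp measurable_fst).prodMk measurable_snd)).inter hnot
  obtain ⟨B, hAB, hdisj, hB⟩ := (analyticSet_range_uncurry hfm).measurablySeparable
    (hV.analyticSet_image measurable_snd)
    (disjoint_left.2 <| by
      rintro _ hy ⟨⟨x, y⟩, ⟨hxy, hyx⟩, rfl⟩
      exact hyx (mem_range_of_rel_of_mem_range_uncurry hF hfF hf hy hxy))
  refine ⟨B, hB, hAB, ?_⟩
  rintro _ ⟨⟨x₀, n₀⟩, rfl⟩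
  refine (countable_range (f x₀)).mono fun y' ⟨hy', hy'B⟩ => ?_
  by_contra hy'x₀
  exact disjoint_right.1 hdisj hy'B
    ⟨(x₀, y'), ⟨hF.trans (hfF x₀ n₀) hy', hy'x₀⟩, rfl⟩

end Uniformization

theorem stmt16_general {X Y : Type}
    [TopologicalSpace X] [PolishSpace X] [MeasurableSpace X] [BorelSpace X]
    [TopologicalSpace Y] [PolishSpace Y] [MeasurableSpace Y] [BorelSpace Y]
    (E : X → X → Prop)
    (F : Y → Y → Prop) (hF : Equivalence F)
    (hFborel : MeasurableSet {p : Y × Y | F p.1 p.2})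
    (hFKsigma : ∀ y : Y, ∃ K : ℕ → Set Y, (∀ n, IsCompact (K n)) ∧ {y' | F y y'} = ⋃ n, K n)
    (g : X → Y) (hg : Measurable g) (hred : ∀ x x', E x x' ↔ F (g x) (g x'))
    (hnotctble : ¬ ∃ (Z : Type) (tZ : TopologicalSpace Z) (mZ : MeasurableSpace Z),
      @PolishSpace Z tZ ∧ @BorelSpace Z tZ mZ ∧
      ∃ F' : Z → Z → Prop, Equivalence F' ∧
        MeasurableSet[mZ.prod mZ] {p : Z × Z | F' p.1 p.2} ∧
        (∀ z, {z' | F' z z'}.Countable) ∧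
        ∃ S : X → Z, @Measurable X Z _ mZ S ∧ ∀ x x', E x x' ↔ F' (S x) (S x')) :
    (∀ x x', E x x' → ∀ y, (F (g x) y ↔ F (g x') y)) ∧
    (∀ x, ∃ K : ℕ → Set Y, (∀ n, IsCompact (K n)) ∧ {y | F (g x) y} = ⋃ n, K n) ∧
    ¬ ∃ f : X → ℕ → Y, Measurable f ∧ (∀ x n, F (g x) (f x n)) ∧
        ∀ x x', E x x' → Set.range (f x) = Set.range (f x') := by
  refine ⟨fun x x' hxx' y => hF.rel_iff_rel_of_rel ((hred x x').1 hxx') (hF.refl y),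
    fun x => hFKsigma (g x), ?_⟩
  rintro ⟨f, hfm, hfF, hf⟩
  obtain ⟨B, hB, hAB, hBcount⟩ := exists_measurableSet_countable_classes_of_uniformization hF
    hFborel hg hfm hfF fun x x' h => hf x x' ((hred x x').2 h)
  obtain ⟨B', hB', hAB', hB'count⟩ :=
    (analyticSet_range_uncurry hfm).exists_measurableSet_countable_classes hF hFborel hB hAB hBcount
  have hf₀ : ∀ x, f x 0 ∈ B' := fun x => hAB' ⟨(x, 0), rfl⟩
  refine hnotctble ⟨Y, _, _, inferInstance, inferInstance, restrictRel F B', hF.restrictRel B',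
    hFborel.setOf_restrictRel hB', countable_setOf_restrictRel hB'count, fun x => f x 0,
    (measurable_pi_apply 0).comp hfm, fun x x' => ?_⟩
  rw [hred, restrictRel_iff hF (hf₀ x) (hf₀ x')]
  exact hF.rel_iff_rel_of_rel (hfF x 0) (hfF x' 0)

/-- Let `E` be a Borel equivalence relation on a Polish space `X`, Borel reducible
(via `g`) to a Borel equivalence relation `F` on a Polish space `Y` all of whose classes are
`Kσ`, but not Borel reducible to any countable Borel equivalence relation on a Polish space.
Then `P(x,y) ⟺ F (g x) y` is `E`-invariant with `Kσ` sections but admits no Borel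
`E`-invariant countable uniformization. -/
theorem stmt16 {X Y : Type}
    [TopologicalSpace X] [PolishSpace X] [MeasurableSpace X] [BorelSpace X]
    [TopologicalSpace Y] [PolishSpace Y] [MeasurableSpace Y] [BorelSpace Y]
    (E : X → X → Prop) (hE : Equivalence E)
    (hEborel : MeasurableSet {p : X × X | E p.1 p.2})
    (F : Y → Y → Prop) (hF : Equivalence F)
    (hFborel : MeasurableSet {p : Y × Y | F p.1 p.2})
    (hFKsigma : ∀ y : Y, ∃ K : ℕ → Set Y, (∀ n, IsCompact (K n)) ∧ {y' | F y y'} = ⋃ n, K n)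
    (g : X → Y) (hg : Measurable g) (hred : ∀ x x', E x x' ↔ F (g x) (g x'))
    (hnotctble : ¬ ∃ (Z : Type) (tZ : TopologicalSpace Z) (mZ : MeasurableSpace Z),
      @PolishSpace Z tZ ∧ @BorelSpace Z tZ mZ ∧
      ∃ F' : Z → Z → Prop, Equivalence F' ∧
        MeasurableSet[mZ.prod mZ] {p : Z × Z | F' p.1 p.2} ∧
        (∀ z, {z' | F' z z'}.Countable) ∧
        ∃ S : X → Z, @Measurable X Z _ mZ S ∧ ∀ x x', E x x' ↔ F' (S x) (S x')) :
    (∀ x x', E x x' → ∀ y, (F (g x) y ↔ F (g x') y)) ∧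
    (∀ x, ∃ K : ℕ → Set Y, (∀ n, IsCompact (K n)) ∧ {y | F (g x) y} = ⋃ n, K n) ∧
    ¬ ∃ f : X → ℕ → Y, Measurable f ∧ (∀ x n, F (g x) (f x n)) ∧
        ∀ x x', E x x' → Set.range (f x) = Set.range (f x') :=
  stmt16_general E F hF hFborel hFKsigma g hg hred hnotctble
end
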